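/- arXiv:2604.11223 — 5 statements merged into one kernel-verified Lean document; each statement's English description precedes it below -/
import Mathlib

section
/- For a linear model f(X) = Σᵢ aᵢXᵢ with mutually independent random features X₁,…,Xₚ, the Local Shapley Value of feature l at observation x, defined with value function v(S) = E[f(X) | X_S = x_S] and standard Shapley weights, equals a_l(x_l − E[X_l]). -/
open Finset MeasureTheory

/-- Shapley value of player `l` for the game `v` on `p` players, with standard weights
`w(S) = (1/p) * C(p-1, |S|)⁻¹`. -/
noncomputable def shapleyValue (p : ℕ) (v : Finset (Fin p) → ℝ) (l : Fin p) : ℝ :=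
  ∑ S ∈ (Finset.univ.erase l).powerset,
    (1 / (p : ℝ)) * ((Nat.choose (p - 1) S.card : ℝ))⁻¹ * (v (insert l S) - v S)

/-! Independence makes `v` an additive game, `v S = v ∅ + ∑ i ∈ S, a i (x i - E[X i])`, so
every marginal contribution of `l` equals `a l (x l - E[X l])`; since the Shapley weights sum
to one, this common value is the Shapley value. -/

theorem sum_shapley_weights_eq_one {p : ℕ} (hp : 0 < p) (l : Fin p) :
    ∑ S ∈ (univ.erase l).powerset, (1 / (p : ℝ)) * ((p - 1).choose S.card : ℝ)⁻¹ = 1 := by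
  have hcard : (univ.erase l).card = p - 1 := by simp
  rw [sum_powerset_apply_card (fun k => (1 / (p : ℝ)) * ((p - 1).choose k : ℝ)⁻¹),
    hcard]
  have hterm : ∀ k ∈ range (p - 1 + 1),
      (p - 1).choose k • ((1 / (p : ℝ)) * ((p - 1).choose k : ℝ)⁻¹) = 1 / p := by
    intro k hk
    have hchoose : ((p - 1).choose k : ℝ) ≠ 0 := by
      exact_mod_cast (Nat.choose_pos (Nat.lt_succ_iff.mp (mem_range.mp hk))).ne'
    rw [nsmul_eq_mul]
    field_simp
  rw [sum_congr rfl hterm, sum_const, card_range, Nat.sub_add_cancel hp, nsmul_eq_mul]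
  field_simp [(Nat.cast_pos.mpr hp).ne']

theorem shapleyValue_eq_of_marginal_eq {p : ℕ} (hp : 0 < p) {v : Finset (Fin p) → ℝ}
    {l : Fin p} {c : ℝ} (h : ∀ S, l ∉ S → v (insert l S) - v S = c) :
    shapleyValue p v l = c := by
  have hmarg : ∀ S ∈ (univ.erase l).powerset, v (insert l S) - v S = c := fun S hS =>
    h S fun hl => by simpa using mem_powerset.mp hS hl
  rw [shapleyValue, sum_congr rfl fun S hS => by rw [hmarg S hS], ← sum_mul,
    sum_shapley_weights_eq_one hp, one_mul]

theorem shapleyValue_const_add_sum {p : ℕ} (hp : 0 < p) (c : ℝ) (w : Fin p → ℝ) (l : Fin p) :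
    shapleyValue p (fun S => c + ∑ i ∈ S, w i) l = w l :=
  shapleyValue_eq_of_marginal_eq hp fun S hl => by rw [sum_insert hl]; ring

theorem sum_mul_ite_mem_eq {ι : Type*} [Fintype ι] [DecidableEq ι] (S : Finset ι)
    (a x m : ι → ℝ) :
    ∑ i, a i * (if i ∈ S then x i else m i) = ∑ i, a i * m i + ∑ i ∈ S, a i * (x i - m i) := by
  have hsplit : ∀ i, a i * (if i ∈ S then x i else m i)
      = a i * m i + if i ∈ S then a i * (x i - m i) else 0 := by
    intro i; split_ifs <;> ring
  rw [sum_congr rfl fun i _ => hsplit i, sum_add_distrib, sum_ite_mem, univ_inter]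

theorem integral_pi_sum_mul_ite_mem {ι : Type*} [Fintype ι] [DecidableEq ι]
    (μ : ι → Measure ℝ) [∀ i, IsProbabilityMeasure (μ i)]
    (hint : ∀ i, Integrable id (μ i)) (S : Finset ι) (a x : ι → ℝ) :
    ∫ y, (∑ i, a i * (if i ∈ S then x i else y i)) ∂Measure.pi μ
      = ∑ i, a i * (if i ∈ S then x i else ∫ t, t ∂μ i) := by
  have hintegrable : ∀ i ∈ univ,
      Integrable (fun y : ι → ℝ => a i * (if i ∈ S then x i else y i)) (Measure.pi μ) := by
    intro i _
    split_ifs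
    · exact integrable_const _
    · exact (integrable_eval (hint i)).const_mul _
  rw [integral_finsetSum _ hintegrable]
  refine sum_congr rfl fun i _ => ?_
  split_ifs
  · simp
  · rw [integral_const_mul, integral_eval]

/-- For a linear model `f(X) = ∑ i, a i * X i` with mutually independent integrable features
(feature `i` has law `μ i`, the joint law being the product measure), the Local Shapley Value
of feature `l` at observation `x`, defined with value function
`v(S) = E[f(X) | X_S = x_S]` (conditioning = marginalizing the complement), equals
`a l * (x l − E[X l])`. -/
theorem localShapley_linear_model (p : ℕ) (hp : 0 < p) (a x : Fin p → ℝ)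
    (μ : Fin p → Measure ℝ) [∀ i, IsProbabilityMeasure (μ i)]
    (hint : ∀ i, Integrable (id : ℝ → ℝ) (μ i)) (l : Fin p) :
    shapleyValue p
      (fun S => ∫ y, (∑ i, a i * (if i ∈ S then x i else y i)) ∂(Measure.pi μ)) l
      = a l * (x l - ∫ t, t ∂(μ l)) := by
  simp_rw [integral_pi_sum_mul_ite_mem μ hint, sum_mul_ite_mem_eq]
  exact shapleyValue_const_add_sum hp _ (fun i => a i * (x i - ∫ t, t ∂μ i)) l
end

section
/- Let X₁,…,X₆ be independent with Xᵢ ~ Uniform[−1,1], and f(X) = (a₁X₁ + a₂X₂)·1{X₆ ≤ 0} + (a₃X₃ + a₄X₄)·1{X₆ > 0}. For an observation x with x₆ ≤ 0 and for i ∈ {3,4}, the Local Shapley Value φ_{x_i} (with value function v(S) = E[f(X) | X_S = x_S]) equals K·aᵢ·(xᵢ − E[Xᵢ]) = K·aᵢ·xᵢ for a constant K proportional to P(X₆ > 0); in particular φ_{x_i} ≠ 0 whenever aᵢxᵢ ≠ 0, even though feature i does not influence the prediction at x. -/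
open Finset MeasureTheory

/-- The uniform probability measure on `[-1, 1]`. -/
noncomputable def unif : Measure ℝ :=
  (2⁻¹ : ENNReal) • MeasureTheory.volume.restrict (Set.Icc (-1) 1)

/-- The joint law of six i.i.d. `Uniform[-1,1]` features. -/
noncomputable def law6 : Measure (Fin 6 → ℝ) := Measure.pi fun _ => unif

/-- The piecewise linear model
`f(X) = (a₁X₁ + a₂X₂)·1{X₆ ≤ 0} + (a₃X₃ + a₄X₄)·1{X₆ > 0}` (0-indexed). -/
noncomputable def fSwitch (a : Fin 6 → ℝ) (z : Fin 6 → ℝ) : ℝ :=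
  (a 0 * z 0 + a 1 * z 1) * (if z 5 ≤ 0 then 1 else 0)
    + (a 2 * z 2 + a 3 * z 3) * (if 0 < z 5 then 1 else 0)

/-- The Local Shapley Value of feature `i` at `x`, with value function
`v(S) = E[f(X) | X_S = x_S]` (conditioning = marginalization by independence). -/
noncomputable def lsv (a x : Fin 6 → ℝ) (i : Fin 6) : ℝ :=
  shapleyValue 6
    (fun S => ∫ y, fSwitch a (fun j => if j ∈ S then x j else y j) ∂law6) i

/-! Under independence, fixing the features in `S` at `x` turns the law of `X` into a product of
point masses and uniform laws, so the value function factorises: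
`v(S) = (a₁m₁ + a₂m₂)·P_S(X₆ ≤ 0) + (a₃m₃ + a₄m₄)·P_S(X₆ > 0)`, where `mⱼ` is `xⱼ` if `j ∈ S`
and `E[Xⱼ]` otherwise. Adding a feature `i ∈ {3, 4}` to `S` only moves `mᵢ` from `E[Xᵢ]` to `xᵢ`,
so its marginal contribution is `aᵢ(xᵢ − E[Xᵢ])·P(X₆ > 0)` when `6 ∉ S`, and `0` when `6 ∈ S`
because `x₆ ≤ 0`. The Shapley weights of the coalitions avoiding a fixed other player sum to
`1/2`, hence `φ_{xᵢ} = ½·P(X₆ > 0)·aᵢ(xᵢ − E[Xᵢ])`. -/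

theorem sum_choose_mul_inv_choose_succ (n : ℕ) :
    ∑ k ∈ range (n + 1), (n.choose k : ℝ) * (((n : ℝ) + 2) * ((n + 1).choose k : ℝ))⁻¹
      = 1 / 2 := by
  have hterm : ∀ k ∈ range (n + 1),
      (n.choose k : ℝ) * (((n : ℝ) + 2) * ((n + 1).choose k : ℝ))⁻¹
        = ((n : ℝ) + 1 - k) / (((n : ℝ) + 1) * ((n : ℝ) + 2)) := by
    intro k hk
    have hkn : k ≤ n := Nat.lt_succ_iff.1 (mem_range.1 hk)
    have hpos : (0 : ℝ) < (n + 1).choose k := Nat.cast_pos.2 (Nat.choose_pos (by omega))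
    have hrec : (n.choose k : ℝ) * (n + 1) = (n + 1).choose k * ((n : ℝ) + 1 - k) := by
      have := Nat.choose_mul_succ_eq n k
      rw [show n + 1 - k = (n - k) + 1 by omega] at this
      rw [show (n : ℝ) + 1 - k = ((n - k : ℕ) : ℝ) + 1 by push_cast [hkn]; ring]
      exact_mod_cast this
    field_simp
    linear_combination hrec
  have hgauss : ∑ k ∈ range (n + 1), ((n : ℝ) + 1 - k) = (n + 1) * (n + 2) / 2 := by
    have hid : (∑ k ∈ range (n + 1), (k : ℝ)) * 2 = (n + 1) * n := by
      have := Finset.sum_range_id_mul_two (n + 1)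
      rw [Nat.add_sub_cancel] at this
      have := congrArg (Nat.cast : ℕ → ℝ) this
      push_cast at this
      exact this
    rw [sum_sub_distrib, sum_const, card_range, nsmul_eq_mul]
    push_cast
    linarith
  rw [sum_congr rfl hterm, ← sum_div, hgauss]
  field_simp

-- The weights of the coalitions avoiding `j` sum to `1/2`: the probability that `l` precedes `j`
-- in a uniformly random order of the players.
theorem shapleyValue_eq_half_of_marginal {p : ℕ} {v : Finset (Fin p) → ℝ} {l j : Fin p}
    (hjl : j ≠ l) (c : ℝ) (hv : ∀ S, l ∉ S → v (insert l S) - v S = if j ∈ S then 0 else c) :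
    shapleyValue p v l = c / 2 := by
  obtain ⟨n, rfl⟩ : ∃ n, p = n + 2 :=
    ⟨p - 2, by have := Fin.val_ne_of_ne hjl; have := j.isLt; have := l.isLt; omega⟩
  set T := (univ.erase l).erase j
  have hjT : j ∉ T := notMem_erase j _
  have hlT : ∀ S ⊆ T, l ∉ S := fun S hS hl => by simpa [T] using hS hl
  have hT : univ.erase l = insert j T := (insert_erase (mem_erase.2 ⟨hjl, mem_univ _⟩)).symm
  have hcard : T.card = n := by
    rw [card_erase_of_mem (mem_erase.2 ⟨hjl, mem_univ _⟩), card_erase_of_mem (mem_univ _),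
      card_univ, Fintype.card_fin]
    rfl
  rw [shapleyValue, hT, sum_powerset_insert hjT]
  have hwith : ∀ S ∈ T.powerset,
      (1 / ((n + 2 : ℕ) : ℝ)) * ((n + 2 - 1).choose (insert j S).card : ℝ)⁻¹
        * (v (insert l (insert j S)) - v (insert j S)) = 0 := fun S hS => by
    rw [hv _ (by simpa [hjl.symm] using hlT S (mem_powerset.1 hS)), if_pos (mem_insert_self _ _),
      mul_zero]
  have hwithout : ∀ S ∈ T.powerset,
      (1 / ((n + 2 : ℕ) : ℝ)) * ((n + 2 - 1).choose S.card : ℝ)⁻¹ * (v (insert l S) - v S)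
        = (((n : ℝ) + 2) * ((n + 1).choose S.card : ℝ))⁻¹ * c := fun S hS => by
    rw [hv _ (hlT S (mem_powerset.1 hS)), if_neg (fun h => hjT (mem_powerset.1 hS h))]
    push_cast
    simp only [one_div, mul_inv]
  rw [sum_eq_zero hwith, add_zero, sum_congr rfl hwithout,
    sum_powerset_apply_card (fun k => (((n : ℝ) + 2) * ((n + 1).choose k : ℝ))⁻¹ * c), hcard]
  simp only [nsmul_eq_mul, ← mul_assoc, ← sum_mul, sum_choose_mul_inv_choose_succ]
  ring

theorem measurable_ite_const {α : Type*} [MeasurableSpace α] (p : Prop) [Decidable p] (c : α) :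
    Measurable fun t : α => if p then c else t := by
  by_cases h : p <;> simp only [h, if_true, if_false] <;> fun_prop

section FixedCoordinates

variable {ι α : Type*} [DecidableEq ι] [MeasurableSpace α]

noncomputable def fixedLaw (μ : ι → Measure α) (S : Finset ι) (x : ι → α) (j : ι) : Measure α :=
  if j ∈ S then Measure.dirac (x j) else μ j

instance (μ : ι → Measure α) [∀ j, IsProbabilityMeasure (μ j)] (S : Finset ι) (x : ι → α)
    (j : ι) : IsProbabilityMeasure (fixedLaw μ S x j) := by
  unfold fixedLaw; split_ifs <;> infer_instance

theorem map_pi_eq_pi_fixedLaw [Fintype ι] (μ : ι → Measure α) [∀ j, IsProbabilityMeasure (μ j)]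
    (S : Finset ι) (x : ι → α) :
    (Measure.pi μ).map (fun y j => if j ∈ S then x j else y j) = Measure.pi (fixedLaw μ S x) := by
  rw [Measure.pi_map_pi (fun j => (measurable_ite_const (j ∈ S) (x j)).aemeasurable)]
  congr 1
  ext1 j
  unfold fixedLaw
  by_cases h : j ∈ S <;> simp only [h, if_true, if_false]
  · rw [Measure.map_const, measure_univ, one_smul]
  · exact Measure.map_id

theorem integral_id_fixedLaw (μ : ι → Measure ℝ) (S : Finset ι) (x : ι → ℝ) (j : ι) :
    ∫ t, t ∂fixedLaw μ S x j = if j ∈ S then x j else ∫ t, t ∂μ j := by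
  unfold fixedLaw; split_ifs <;> simp

theorem integrable_id_fixedLaw {μ : ι → Measure ℝ} (hμ : ∀ j, Integrable id (μ j))
    (S : Finset ι) (x : ι → ℝ) (j : ι) : Integrable id (fixedLaw μ S x j) := by
  unfold fixedLaw; split_ifs
  · exact integrable_dirac (by simp)
  · exact hμ j

end FixedCoordinates

section ProductMeasure

variable {ι : Type*} [Fintype ι] {ν : ι → Measure ℝ} [∀ j, IsProbabilityMeasure (ν j)]
  {k l : ι} {g : ℝ → ℝ}

theorem indepFun_eval_comp_eval (hkl : k ≠ l) (hg : Measurable g) :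
    ProbabilityTheory.IndepFun (fun z : ι → ℝ => z k) (fun z => g (z l)) (Measure.pi ν) :=
  ((ProbabilityTheory.iIndepFun_pi (X := fun _ => id) fun _ => aemeasurable_id).indepFun
    hkl).comp measurable_id hg

theorem integrable_eval_mul_comp_eval (hkl : k ≠ l) (hg : Measurable g)
    (hk : Integrable id (ν k)) (hgi : Integrable g (ν l)) :
    Integrable (fun z : ι → ℝ => z k * g (z l)) (Measure.pi ν) :=
  (indepFun_eval_comp_eval hkl hg).integrable_mul (integrable_comp_eval (f := id) hk)
    (integrable_comp_eval hgi)

theorem integral_eval_mul_comp_eval (hkl : k ≠ l) (hg : Measurable g) :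
    ∫ z, z k * g (z l) ∂Measure.pi ν = (∫ t, t ∂ν k) * ∫ t, g t ∂ν l := by
  rw [(indepFun_eval_comp_eval hkl hg).integral_fun_mul_eq_mul_integral
    (measurable_pi_apply k).aestronglyMeasurable
    (hg.comp (measurable_pi_apply l)).aestronglyMeasurable, integral_eval,
    integral_comp_eval hg.aestronglyMeasurable]

end ProductMeasure

theorem measurable_fSwitch (a : Fin 6 → ℝ) : Measurable (fSwitch a) := by
  have hle : MeasurableSet {z : Fin 6 → ℝ | z 5 ≤ 0} :=
    measurableSet_le (measurable_pi_apply 5) measurable_const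
  have hlt : MeasurableSet {z : Fin 6 → ℝ | 0 < z 5} :=
    measurableSet_lt measurable_const (measurable_pi_apply 5)
  exact ((by fun_prop : Measurable fun z : Fin 6 → ℝ => a 0 * z 0 + a 1 * z 1).mul
    (measurable_const.ite hle measurable_const)).add
    ((by fun_prop : Measurable fun z : Fin 6 → ℝ => a 2 * z 2 + a 3 * z 3).mul
    (measurable_const.ite hlt measurable_const))

theorem integral_fSwitch_pi (a : Fin 6 → ℝ) {ν : Fin 6 → Measure ℝ}
    [∀ j, IsProbabilityMeasure (ν j)] (hν : ∀ j, Integrable id (ν j)) :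
    ∫ z, fSwitch a z ∂Measure.pi ν
      = (a 0 * ∫ t, t ∂ν 0 + a 1 * ∫ t, t ∂ν 1) * (ν 5).real (Set.Iic 0)
        + (a 2 * ∫ t, t ∂ν 2 + a 3 * ∫ t, t ∂ν 3) * (ν 5).real (Set.Ioi 0) := by
  set neg := (Set.Iic (0 : ℝ)).indicator (1 : ℝ → ℝ)
  set pos := (Set.Ioi (0 : ℝ)).indicator (1 : ℝ → ℝ)
  have hneg : Measurable neg := measurable_const.indicator measurableSet_Iic
  have hpos : Measurable pos := measurable_const.indicator measurableSet_Ioi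
  have hnegi : Integrable neg (ν 5) := (integrable_const (1 : ℝ)).indicator measurableSet_Iic
  have hposi : Integrable pos (ν 5) := (integrable_const (1 : ℝ)).indicator measurableSet_Ioi
  have i0 := integrable_eval_mul_comp_eval (by decide : (0 : Fin 6) ≠ 5) hneg (hν 0) hnegi
  have i1 := integrable_eval_mul_comp_eval (by decide : (1 : Fin 6) ≠ 5) hneg (hν 1) hnegi
  have i2 := integrable_eval_mul_comp_eval (by decide : (2 : Fin 6) ≠ 5) hpos (hν 2) hposi
  have i3 := integrable_eval_mul_comp_eval (by decide : (3 : Fin 6) ≠ 5) hpos (hν 3) hposi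
  have hsplit : fSwitch a = fun z => a 0 * (z 0 * neg (z 5)) + a 1 * (z 1 * neg (z 5))
      + (a 2 * (z 2 * pos (z 5)) + a 3 * (z 3 * pos (z 5))) := by
    funext z
    simp only [fSwitch, neg, pos, Set.indicator_apply, Set.mem_Iic, Set.mem_Ioi, Pi.one_apply]
    ring
  have h01 : Integrable (fun z => a 0 * (z 0 * neg (z 5)) + a 1 * (z 1 * neg (z 5)))
      (Measure.pi ν) := (i0.const_mul _).add (i1.const_mul _)
  have h23 : Integrable (fun z => a 2 * (z 2 * pos (z 5)) + a 3 * (z 3 * pos (z 5)))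
      (Measure.pi ν) := (i2.const_mul _).add (i3.const_mul _)
  rw [hsplit, integral_add h01 h23, integral_add (i0.const_mul _) (i1.const_mul _),
    integral_add (i2.const_mul _) (i3.const_mul _), integral_const_mul, integral_const_mul,
    integral_const_mul, integral_const_mul,
    integral_eval_mul_comp_eval (by decide : (0 : Fin 6) ≠ 5) hneg,
    integral_eval_mul_comp_eval (by decide : (1 : Fin 6) ≠ 5) hneg,
    integral_eval_mul_comp_eval (by decide : (2 : Fin 6) ≠ 5) hpos,
    integral_eval_mul_comp_eval (by decide : (3 : Fin 6) ≠ 5) hpos,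
    integral_indicator_one measurableSet_Iic, integral_indicator_one measurableSet_Ioi]
  ring

instance : IsProbabilityMeasure unif := by
  constructor
  rw [unif, Measure.smul_apply, Measure.restrict_apply_univ, Real.volume_Icc]
  norm_num
  exact ENNReal.inv_mul_cancel two_ne_zero ENNReal.ofNat_ne_top

theorem integrable_id_unif : Integrable id unif := by
  refine Integrable.smul_measure ?_ (by norm_num)
  exact continuous_id.integrableOn_Icc

theorem integral_id_unif : ∫ t, t ∂unif = 0 := by
  rw [unif, integral_smul_measure, integral_Icc_eq_integral_Ioc,
    ← intervalIntegral.integral_of_le (by norm_num), integral_id]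
  norm_num

theorem unif_real_Ioi : unif.real (Set.Ioi 0) = 1 / 2 := by
  have hinter : Set.Ioi (0 : ℝ) ∩ Set.Icc (-1) 1 = Set.Ioc 0 1 := by
    ext t
    simp only [Set.mem_inter_iff, Set.mem_Ioi, Set.mem_Icc, Set.mem_Ioc]
    grind
  rw [measureReal_def, unif, Measure.smul_apply, Measure.restrict_apply measurableSet_Ioi, hinter,
    Real.volume_Ioc]
  norm_num

theorem integral_fSwitch_fixed (a x : Fin 6 → ℝ) (S : Finset (Fin 6)) :
    ∫ y, fSwitch a (fun j => if j ∈ S then x j else y j) ∂law6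
      = ∫ z, fSwitch a z ∂Measure.pi (fixedLaw (fun _ => unif) S x) := by
  rw [← map_pi_eq_pi_fixedLaw, integral_map _ (measurable_fSwitch a).aestronglyMeasurable]
  · rfl
  · exact (measurable_pi_lambda _ fun j =>
      (measurable_ite_const (j ∈ S) (x j)).comp (measurable_pi_apply j)).aemeasurable

theorem integral_fSwitch_fixed_insert_sub (a x : Fin 6 → ℝ) {S : Finset (Fin 6)} {i : Fin 6}
    (hi : i ∈ ({2, 3} : Finset (Fin 6))) (hiS : i ∉ S) :
    ∫ y, fSwitch a (fun j => if j ∈ insert i S then x j else y j) ∂law6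
        - ∫ y, fSwitch a (fun j => if j ∈ S then x j else y j) ∂law6
      = a i * (x i - ∫ t, t ∂unif) * (fixedLaw (fun _ => unif) S x 5).real (Set.Ioi 0) := by
  have hν := integrable_id_fixedLaw (fun _ => integrable_id_unif) (x := x)
  rw [integral_fSwitch_fixed, integral_fSwitch_fixed, integral_fSwitch_pi a (hν _),
    integral_fSwitch_pi a (hν _)]
  simp only [integral_id_fixedLaw]
  simp only [mem_insert, mem_singleton] at hi
  rcases hi with rfl | rfl <;>
  · simp only [fixedLaw, mem_insert, Fin.reduceEq, false_or, or_false, hiS, ↓reduceIte]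
    ring

theorem fixedLaw_unif_real_Ioi {x : Fin 6 → ℝ} (hx : x 5 ≤ 0) (S : Finset (Fin 6)) :
    (fixedLaw (fun _ => unif) S x 5).real (Set.Ioi 0)
      = if 5 ∈ S then 0 else unif.real (Set.Ioi 0) := by
  unfold fixedLaw
  split_ifs
  · rw [measureReal_def, Measure.dirac_apply' _ measurableSet_Ioi,
      Set.indicator_of_notMem (Set.notMem_Ioi.2 hx), ENNReal.toReal_zero]
  · rfl

theorem lsv_eq_of_mem {a x : Fin 6 → ℝ} (hx : x 5 ≤ 0) {i : Fin 6}
    (hi : i ∈ ({2, 3} : Finset (Fin 6))) :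
    lsv a x i = unif.real (Set.Ioi 0) / 2 * (a i * (x i - ∫ t, t ∂unif)) := by
  have hi5 : (5 : Fin 6) ≠ i := fun h5 => absurd (h5 ▸ hi) (by decide)
  rw [lsv, shapleyValue_eq_half_of_marginal hi5
    (a i * (x i - ∫ t, t ∂unif) * unif.real (Set.Ioi 0))]
  · ring
  · intro S hiS
    rw [integral_fSwitch_fixed_insert_sub a x hi hiS, fixedLaw_unif_real_Ioi hx]
    split_ifs <;> ring

/-- For an observation `x` with `x₆ ≤ 0`, the Local Shapley Values of the locally unused
features `X₃, X₄` (indices 2, 3) equal `K · aᵢ · (xᵢ − E[Xᵢ]) = K · aᵢ · xᵢ` for a constant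
`K > 0` proportional to `P(X₆ > 0)`; in particular they are nonzero whenever `aᵢxᵢ ≠ 0`. -/
theorem lsv_not_local (a x : Fin 6 → ℝ) (hx : x 5 ≤ 0) :
    ∃ K : ℝ, 0 < K ∧ (∃ c : ℝ, 0 < c ∧ K = c * (unif (Set.Ioi 0)).toReal) ∧
      ∀ i ∈ ({2, 3} : Finset (Fin 6)),
        (lsv a x i = K * (a i * (x i - ∫ t, t ∂unif)) ∧ lsv a x i = K * (a i * x i) ∧
          (a i * x i ≠ 0 → lsv a x i ≠ 0)) := by
  refine ⟨unif.real (Set.Ioi 0) / 2, by rw [unif_real_Ioi]; norm_num,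
    ⟨1 / 2, by norm_num, by rw [measureReal_def]; ring⟩, fun i hi => ?_⟩
  have hφ := lsv_eq_of_mem (a := a) hx hi
  have hφ' : lsv a x i = unif.real (Set.Ioi 0) / 2 * (a i * x i) := by
    rw [hφ, integral_id_unif, sub_zero]
  exact ⟨hφ, hφ', fun hne => by rw [hφ', unif_real_Ioi]; positivity⟩
end

section
/- Let f : ℝᵖ → ℝ be piecewise linear on disjoint hyperrectangles A_k = Πᵢ [l_{i,k}, r_{i,k}], k = 1,…,m, with f(X) = Σₖ (Σᵢ a_{i,k}Xᵢ + b_k)·1{X ∈ A_k}, and let features be mutually independent with P(Xᵢ ∈ A_{i,k}) > 0 for all i,k. Then the Local Shapley Value of feature l at x decomposes as φ_{x_l} = Σ_{k=1}^m φ_{x_l}^k, where φ_{x_l}^k = (1{x_l ∈ A_{l,k}}/P(X_l ∈ A_{l,k}) − 1)·Σ_{S⊆[p]\{l}} w(S)·v_k(S) + a_{l,k}·(x_l − E[X_l·1{X_l∈A_{l,k}}]/P(X_l∈A_{l,k}))·Σ_{S⊆[p]\{l}} w(S)·Π_{i∈S∪{l}} 1{x_i∈A_{i,k}}·Π_{j∉S∪{l}}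 P(X_j∈A_{j,k}), with v_k(S) = E[f_k(X)·1{X∈A_k} | X_S = x_S] and w(S) = (1/p)·C(p−1,|S|)⁻¹. -/
open Finset MeasureTheory Classical

/-- The piecewise linear model `f(X) = ∑ₖ (∑ᵢ a_{i,k} Xᵢ + b_k)·1{X ∈ A_k}`,
with `A_k = Πᵢ A_{i,k}`. -/
noncomputable def piecewiseLinear (p m : ℕ) (a : Fin p → Fin m → ℝ) (b : Fin m → ℝ)
    (A : Fin p → Fin m → Set ℝ) (z : Fin p → ℝ) : ℝ :=
  ∑ k, (∑ i, a i k * z i + b k) *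
    Set.indicator {w : Fin p → ℝ | ∀ i, w i ∈ A i k} (fun _ => (1 : ℝ)) z

/-- Component value function `v_k(S) = E[f_k(X)·1{X ∈ A_k} | X_S = x_S]`, where conditioning
means substituting `x_S` and integrating the remaining mutually independent coordinates. -/
noncomputable def vComp (p m : ℕ) (a : Fin p → Fin m → ℝ) (b : Fin m → ℝ)
    (A : Fin p → Fin m → Set ℝ) (μ : Fin p → Measure ℝ) (x : Fin p → ℝ)
    (k : Fin m) (S : Finset (Fin p)) : ℝ :=
  ∫ y, (∑ i, a i k * (if i ∈ S then x i else y i) + b k) *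
      Set.indicator {w : Fin p → ℝ | ∀ i, w i ∈ A i k} (fun _ => (1 : ℝ))
        (fun i => if i ∈ S then x i else y i) ∂(Measure.pi μ)

/-!
Fix `k`. Then `v_k(S)` is the mean of `(∑ i, a i k * Z i + b k) * ∏ i, 1{Z i ∈ A i k}`, where
`Z i = x i` for `i ∈ S` and the other `Z i ~ μ i` are independent. Expanding the sum, every term is
a product of functions of single coordinates, so by independence `v_k(S)` is a polynomial in the
one-dimensional moments `c i = E 1{Z i ∈ A i k}` and `e i = E[Z i * 1{Z i ∈ A i k}]` that is
jointly linear in `(c l, e l)`. Adding `l` to `S` replaces `(P(X_l ∈ A_{l,k}), E[X_l; A_{l,k}])`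
by `(1{x_l ∈ A_{l,k}}, x_l * 1{x_l ∈ A_{l,k}})`, so linearity expresses `v_k(S ∪ {l})` through
`v_k(S)` and the product of the moments `c i` for `S ∪ {l}`. Since `v(S) = ∑ k, v_k(S)`, summing
against the Shapley weights gives the formula.
-/

open Function

section BoxMoment

variable {ι R : Type*} [Fintype ι] [DecidableEq ι]

/-- `E[(∑ i, a i * Z i + b) * ∏ i, 1{Z i ∈ A i}]` for independent `Z i`, written in terms of
`c i = P(Z i ∈ A i)` and `e i = E[Z i * 1{Z i ∈ A i}]`. -/
def boxMoment [CommSemiring R] (a : ι → R) (b : R) (c e : ι → R) : R :=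
  ∑ i, a i * e i * ∏ j ∈ univ.erase i, c j + b * ∏ j, c j

theorem boxMoment_mul_self [CommSemiring R] (a : ι → R) (b : R) (c z : ι → R) :
    boxMoment a b c (fun i => z i * c i) = (∑ i, a i * z i + b) * ∏ i, c i := by
  rw [boxMoment, add_mul, sum_mul]
  congr 1
  refine sum_congr rfl fun i _ => ?_
  rw [← mul_prod_erase univ c (mem_univ i)]
  ring

theorem affine_mul_indicator_eq_boxMoment (a : ι → ℝ) (b : ℝ) (A : ι → Set ℝ) (z : ι → ℝ) :
    (∑ i, a i * z i + b) * Set.indicator {w : ι → ℝ | ∀ i, w i ∈ A i} (fun _ => (1 : ℝ)) z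
      = boxMoment a b (fun j => (A j).indicator (fun _ => 1) (z j))
          (fun j => (A j).indicator id (z j)) := by
  have hmul : (fun j => (A j).indicator id (z j))
      = fun j => z j * (A j).indicator (fun _ => 1) (z j) := by
    funext j
    by_cases hj : z j ∈ A j <;> simp [hj]
  have hbox : Set.indicator {w : ι → ℝ | ∀ i, w i ∈ A i} (fun _ => (1 : ℝ)) z
      = ∏ j, (A j).indicator (fun _ => 1) (z j) := by
    simp [Set.indicator_apply, prod_boole]
  rw [hmul, boxMoment_mul_self, hbox]

theorem boxMoment_eq_sum_prod_update [CommSemiring R] (a : ι → R) (b : R) (c e : ι → R) :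
    boxMoment a b c e = ∑ i, a i * ∏ j, update c i (e i) j + b * ∏ j, c j := by
  simp [boxMoment, prod_update_of_mem, sdiff_singleton_eq_erase, mul_assoc]

theorem boxMoment_comp_eq_sum_prod {E : Type*} [CommSemiring R] (a : ι → R) (b : R)
    (g h : ι → E → R) (y : ι → E) :
    boxMoment a b (fun j => g j (y j)) (fun j => h j (y j))
      = ∑ i, a i * ∏ j, update g i (h i) j (y j) + b * ∏ j, g j (y j) := by
  simp only [boxMoment_eq_sum_prod_update, apply_update (fun j (φ : E → R) => φ (y j))]

theorem boxMoment_update [CommSemiring R] (a : ι → R) (b : R) (c e : ι → R) (l : ι) (γ ε : R) :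
    boxMoment a b (update c l γ) (update e l ε)
      = γ * boxMoment a b (update c l 1) (update e l 0) + ε * (a l * ∏ j ∈ univ.erase l, c j) := by
  have hprod : ∀ δ : R, ∏ j, update c l δ j = δ * ∏ j ∈ univ.erase l, c j := fun δ => by
    rw [prod_update_of_mem (mem_univ l), sdiff_singleton_eq_erase]
  have hrest : ∀ δ ε' : R,
      ∑ i ∈ univ.erase l, a i * update e l ε' i * ∏ j ∈ univ.erase i, update c l δ j
        = δ * ∑ i ∈ univ.erase l, a i * e i * ∏ j ∈ (univ.erase i).erase l, c j := by
    intro δ ε'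
    rw [mul_sum]
    refine sum_congr rfl fun i hi => ?_
    rw [update_of_ne (ne_of_mem_erase hi),
      prod_update_of_mem (mem_erase.2 ⟨(ne_of_mem_erase hi).symm, mem_univ l⟩),
      sdiff_singleton_eq_erase]
    ring
  simp only [boxMoment, ← add_sum_erase univ _ (mem_univ l), update_self, hprod, hrest,
    prod_update_of_notMem (notMem_erase l univ)]
  ring

theorem boxMoment_update_eq [Field R] (a : ι → R) (b : R) (c e : ι → R) (l : ι)
    (hc : c l ≠ 0) (x γ : R) :
    boxMoment a b (update c l γ) (update e l (x * γ))
      = γ / c l * boxMoment a b c e + a l * (x - e l / c l) * ∏ j, update c l γ j := by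
  have h := boxMoment_update a b c e l (c l) (e l)
  rw [update_eq_self, update_eq_self] at h
  rw [h, boxMoment_update, prod_update_of_mem (mem_univ l), sdiff_singleton_eq_erase]
  field_simp
  ring

end BoxMoment

theorem comp_piecewise_eq {ι E β : Type*} (S : Finset ι) [∀ j, Decidable (j ∈ S)] (x y : ι → E)
    (f : ι → E → β) :
    (fun j => f j (S.piecewise x y j)) = fun j => S.piecewise (fun j _ => f j (x j)) f j (y j) := by
  funext j
  by_cases hj : j ∈ S <;> simp [hj]

section Integral

variable {ι E : Type*} [DecidableEq ι] [MeasurableSpace E] {μ : ι → Measure E} {g h : ι → E → ℝ}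

theorem integrable_update_apply (hg : ∀ j, Integrable (g j) (μ j))
    (hh : ∀ j, Integrable (h j) (μ j)) (i j : ι) : Integrable (update g i (h i) j) (μ j) := by
  rcases eq_or_ne j i with rfl | hji
  · simpa using hh j
  · simpa [hji] using hg j

theorem integrable_piecewise_const_apply [∀ i, IsFiniteMeasure (μ i)] (S : Finset ι)
    (x : ι → E) {f : ι → E → ℝ} (hf : ∀ j, Integrable (f j) (μ j)) (j : ι) :
    Integrable (S.piecewise (fun j _ => f j (x j)) f j) (μ j) := by
  by_cases hj : j ∈ S <;> simp [hj, hf j]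

theorem integral_piecewise_const_apply [∀ i, IsProbabilityMeasure (μ i)] (S : Finset ι)
    (x : ι → E) (f : ι → E → ℝ) :
    (fun j => ∫ t, S.piecewise (fun j _ => f j (x j)) f j t ∂μ j)
      = S.piecewise (fun j => f j (x j)) fun j => ∫ t, f j t ∂μ j := by
  funext j
  by_cases hj : j ∈ S <;> simp [hj]

variable [Fintype ι]

theorem integrable_boxMoment [∀ i, SigmaFinite (μ i)] (a : ι → ℝ) (b : ℝ)
    (hg : ∀ j, Integrable (g j) (μ j)) (hh : ∀ j, Integrable (h j) (μ j)) :
    Integrable (fun y => boxMoment a b (fun j => g j (y j)) (fun j => h j (y j)))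
      (Measure.pi μ) := by
  simp only [boxMoment_comp_eq_sum_prod]
  exact (integrable_finsetSum _ fun i _ =>
      (Integrable.fintype_prod (integrable_update_apply hg hh i)).const_mul _).add
    ((Integrable.fintype_prod hg).const_mul _)

theorem integral_boxMoment [∀ i, SigmaFinite (μ i)] (a : ι → ℝ) (b : ℝ)
    (hg : ∀ j, Integrable (g j) (μ j)) (hh : ∀ j, Integrable (h j) (μ j)) :
    ∫ y, boxMoment a b (fun j => g j (y j)) (fun j => h j (y j)) ∂Measure.pi μ
      = boxMoment a b (fun j => ∫ t, g j t ∂μ j) (fun j => ∫ t, h j t ∂μ j) := by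
  have hterm : ∀ i, Integrable (fun y => a i * ∏ j, update g i (h i) j (y j)) (Measure.pi μ) :=
    fun i => (Integrable.fintype_prod (integrable_update_apply hg hh i)).const_mul _
  simp only [boxMoment_comp_eq_sum_prod]
  rw [integral_add (integrable_finsetSum _ fun i _ => hterm i)
      ((Integrable.fintype_prod hg).const_mul _), integral_finsetSum _ fun i _ => hterm i]
  simp only [integral_const_mul, integral_fintype_prod_eq_prod, boxMoment_eq_sum_prod_update,
    apply_update (fun j (φ : E → ℝ) => ∫ t, φ t ∂μ j)]

variable [∀ i, IsProbabilityMeasure (μ i)] (S : Finset ι) (x : ι → E)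

theorem integrable_boxMoment_piecewise (a : ι → ℝ) (b : ℝ)
    (hg : ∀ j, Integrable (g j) (μ j)) (hh : ∀ j, Integrable (h j) (μ j)) :
    Integrable (fun y => boxMoment a b (fun j => g j (S.piecewise x y j))
      (fun j => h j (S.piecewise x y j))) (Measure.pi μ) := by
  simp only [comp_piecewise_eq S x]
  exact integrable_boxMoment a b (integrable_piecewise_const_apply S x hg)
    (integrable_piecewise_const_apply S x hh)

theorem integral_boxMoment_piecewise (a : ι → ℝ) (b : ℝ)
    (hg : ∀ j, Integrable (g j) (μ j)) (hh : ∀ j, Integrable (h j) (μ j)) :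
    ∫ y, boxMoment a b (fun j => g j (S.piecewise x y j)) (fun j => h j (S.piecewise x y j))
        ∂Measure.pi μ
      = boxMoment a b (S.piecewise (fun j => g j (x j)) fun j => ∫ t, g j t ∂μ j)
          (S.piecewise (fun j => h j (x j)) fun j => ∫ t, h j t ∂μ j) := by
  simp only [comp_piecewise_eq S x]
  rw [integral_boxMoment a b (integrable_piecewise_const_apply S x hg)
    (integrable_piecewise_const_apply S x hh), integral_piecewise_const_apply,
    integral_piecewise_const_apply]

end Integral

section VComp

variable {p m : ℕ} (a : Fin p → Fin m → ℝ) (b : Fin m → ℝ) {A : Fin p → Fin m → Set ℝ}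
  (μ : Fin p → Measure ℝ) [∀ i, IsProbabilityMeasure (μ i)] (x : Fin p → ℝ) (k : Fin m)
  (S : Finset (Fin p))

theorem integrable_vComp_integrand (hA : ∀ i k, MeasurableSet (A i k))
    (hint : ∀ i, Integrable (id : ℝ → ℝ) (μ i)) :
    Integrable (fun y => (∑ i, a i k * S.piecewise x y i + b k) *
      Set.indicator {w : Fin p → ℝ | ∀ i, w i ∈ A i k} (fun _ => (1 : ℝ)) (S.piecewise x y))
      (Measure.pi μ) := by
  simp only [affine_mul_indicator_eq_boxMoment]
  exact integrable_boxMoment_piecewise S x _ _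
    (fun j => (integrable_const 1).indicator (hA j k)) (fun j => (hint j).indicator (hA j k))

theorem vComp_eq_boxMoment (hA : ∀ i k, MeasurableSet (A i k))
    (hint : ∀ i, Integrable (id : ℝ → ℝ) (μ i)) :
    vComp p m a b A μ x k S
      = boxMoment (a · k) (b k)
          (S.piecewise (fun j => if x j ∈ A j k then 1 else 0) fun j => (μ j (A j k)).toReal)
          (S.piecewise (fun j => x j * if x j ∈ A j k then 1 else 0)
            fun j => ∫ t in A j k, t ∂μ j) := by
  change ∫ y, (∑ i, a i k * S.piecewise x y i + b k) *
      Set.indicator {w : Fin p → ℝ | ∀ i, w i ∈ A i k} (fun _ => (1 : ℝ)) (S.piecewise x y)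
      ∂Measure.pi μ = _
  simp only [affine_mul_indicator_eq_boxMoment]
  rw [integral_boxMoment_piecewise S x _ _
    (fun j => (integrable_const 1).indicator (hA j k)) (fun j => (hint j).indicator (hA j k))]
  congr 1 <;> funext j <;> by_cases hj : j ∈ S
  · simp [hj, Set.indicator_apply]
  · simp [hj, integral_indicator_const _ (hA j k), measureReal_def]
  · simp [hj, Set.indicator_apply]
  · simp [hj, integral_indicator (hA j k)]

theorem vComp_insert (hA : ∀ i k, MeasurableSet (A i k))
    (hint : ∀ i, Integrable (id : ℝ → ℝ) (μ i)) {l : Fin p} (hl : l ∉ S)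
    (hpos : (μ l (A l k)).toReal ≠ 0) :
    vComp p m a b A μ x k (insert l S)
      = ((if x l ∈ A l k then (1 : ℝ) else 0) / (μ l (A l k)).toReal) * vComp p m a b A μ x k S
        + a l k * (x l - (∫ t in A l k, t ∂(μ l)) / (μ l (A l k)).toReal) *
            ((∏ i ∈ insert l S, if x i ∈ A i k then (1 : ℝ) else 0) *
              ∏ j ∈ (insert l S)ᶜ, (μ j (A j k)).toReal) := by
  set ind : Fin p → ℝ := fun j => if x j ∈ A j k then 1 else 0
  set P : Fin p → ℝ := fun j => (μ j (A j k)).toReal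
  set E : Fin p → ℝ := fun j => ∫ t in A j k, t ∂μ j
  have hc : S.piecewise ind P l = P l := piecewise_eq_of_notMem _ _ _ hl
  have he : S.piecewise (fun j => x j * ind j) E l = E l := piecewise_eq_of_notMem _ _ _ hl
  have hT : (∏ i ∈ insert l S, ind i) * ∏ j ∈ (insert l S)ᶜ, P j
      = ∏ j, update (S.piecewise ind P) l (ind l) j := by
    rw [← piecewise_insert, prod_piecewise, univ_inter, ← compl_eq_univ_sdiff]
  rw [vComp_eq_boxMoment a b μ x k _ hA hint, vComp_eq_boxMoment a b μ x k _ hA hint,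
    piecewise_insert, piecewise_insert, hT,
    boxMoment_update_eq _ _ _ _ l (hc ▸ hpos) (x l) (ind l), hc, he]

end VComp

theorem localShapley_piecewiseLinear_general (p m : ℕ) (a : Fin p → Fin m → ℝ) (b : Fin m → ℝ)
    (A : Fin p → Fin m → Set ℝ)
    (hrect : ∀ i k, ∃ lo hi : EReal, A i k = {t : ℝ | lo ≤ (t : EReal) ∧ (t : EReal) ≤ hi})
    (μ : Fin p → Measure ℝ) [∀ i, IsProbabilityMeasure (μ i)]
    (hint : ∀ i, Integrable (id : ℝ → ℝ) (μ i))
    (hpos : ∀ i k, 0 < (μ i (A i k)).toReal)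
    (x : Fin p → ℝ) (l : Fin p) :
    shapleyValue p
      (fun S => ∫ y, piecewiseLinear p m a b A (fun i => if i ∈ S then x i else y i)
        ∂(Measure.pi μ)) l
    = ∑ k,
        (((if x l ∈ A l k then (1 : ℝ) else 0) / (μ l (A l k)).toReal - 1) *
            ∑ S ∈ (Finset.univ.erase l).powerset,
              (1 / (p : ℝ)) * ((Nat.choose (p - 1) S.card : ℝ))⁻¹ * vComp p m a b A μ x k S
          + a l k * (x l - (∫ t in A l k, t ∂(μ l)) / (μ l (A l k)).toReal) *
              ∑ S ∈ (Finset.univ.erase l).powerset,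
                (1 / (p : ℝ)) * ((Nat.choose (p - 1) S.card : ℝ))⁻¹ *
                  ((∏ i ∈ insert l S, if x i ∈ A i k then (1 : ℝ) else 0) *
                    ∏ j ∈ (insert l S)ᶜ, (μ j (A j k)).toReal)) := by
  have hA : ∀ i k, MeasurableSet (A i k) := fun i k => by
    obtain ⟨lo, hi, h⟩ := hrect i k
    exact h ▸ measurable_coe_real_ereal measurableSet_Icc
  have hv : ∀ S : Finset (Fin p),
      ∫ y, piecewiseLinear p m a b A (fun i => if i ∈ S then x i else y i) ∂(Measure.pi μ)
        = ∑ k, vComp p m a b A μ x k S := fun S =>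
    integral_finsetSum _ fun k _ => integrable_vComp_integrand a b μ x k S hA hint
  simp only [shapleyValue, hv, ← sum_sub_distrib, mul_sum]
  rw [sum_comm]
  refine sum_congr rfl fun k _ => ?_
  rw [← sum_add_distrib]
  refine sum_congr rfl fun S hS => ?_
  have hlS : l ∉ S := fun h => (mem_erase.mp (mem_powerset.mp hS h)).1 rfl
  rw [vComp_insert a b μ x k S hA hint hlS (hpos l k).ne']
  ring

/-- **Local Shapley Values for piecewise linear models.** Let `f` be piecewise linear on
disjoint hyperrectangles `A_k = Πᵢ A_{i,k}` (each `A_{i,k}` the trace on `ℝ` of a closed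
`EReal` interval), the features mutually independent with `P(Xᵢ ∈ A_{i,k}) > 0`.
The Local Shapley Value of feature `l` at `x` — with value function
`v(S) = E[f(X) | X_S = x_S]` — decomposes as `φ_{x_l} = ∑ₖ φ_{x_l}^k` with
`φ_{x_l}^k = (1{x_l∈A_{l,k}}/P(X_l∈A_{l,k}) − 1)·∑_S w(S) v_k(S)
  + a_{l,k}·(x_l − E[X_l·1{X_l∈A_{l,k}}]/P(X_l∈A_{l,k}))
      ·∑_S w(S)·Π_{i∈S∪{l}} 1{x_i∈A_{i,k}}·Π_{j∉S∪{l}} P(X_j∈A_{j,k})`. -/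
theorem localShapley_piecewiseLinear (p m : ℕ) (a : Fin p → Fin m → ℝ) (b : Fin m → ℝ)
    (A : Fin p → Fin m → Set ℝ)
    (hrect : ∀ i k, ∃ lo hi : EReal, A i k = {t : ℝ | lo ≤ (t : EReal) ∧ (t : EReal) ≤ hi})
    (hdisj : Pairwise (Function.onFun Disjoint
      fun k => {w : Fin p → ℝ | ∀ i, w i ∈ A i k}))
    (μ : Fin p → Measure ℝ) [∀ i, IsProbabilityMeasure (μ i)]
    (hint : ∀ i, Integrable (id : ℝ → ℝ) (μ i))
    (hpos : ∀ i k, 0 < (μ i (A i k)).toReal)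
    (x : Fin p → ℝ) (l : Fin p) :
    shapleyValue p
      (fun S => ∫ y, piecewiseLinear p m a b A (fun i => if i ∈ S then x i else y i)
        ∂(Measure.pi μ)) l
    = ∑ k,
        (((if x l ∈ A l k then (1 : ℝ) else 0) / (μ l (A l k)).toReal - 1) *
            ∑ S ∈ (Finset.univ.erase l).powerset,
              (1 / (p : ℝ)) * ((Nat.choose (p - 1) S.card : ℝ))⁻¹ * vComp p m a b A μ x k S
          + a l k * (x l - (∫ t in A l k, t ∂(μ l)) / (μ l (A l k)).toReal) *
              ∑ S ∈ (Finset.univ.erase l).powerset,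
                (1 / (p : ℝ)) * ((Nat.choose (p - 1) S.card : ℝ))⁻¹ *
                  ((∏ i ∈ insert l S, if x i ∈ A i k then (1 : ℝ) else 0) *
                    ∏ j ∈ (insert l S)ᶜ, (μ j (A j k)).toReal)) :=
  localShapley_piecewiseLinear_general p m a b A hrect μ hint hpos x l
end

section
/- Let f be piecewise linear on disjoint hyperrectangles {A_k} as in the Shapley decomposition setting, with mutually independent features, and suppose x ∈ A_{k⋆}. If feature j satisfies A_{j,k} = ℝ for all k (j is not used to define any region boundary), then for any point X with X_{−j} = x_{−j} we have X ∈ A_{k⋆}, and consequently the conditional expectation f_{−j}(x) := E[f(X) | X_{−j} = x_{−j}] equals E[f_{k⋆}(X) | X_{−j} = x_{−j}] = f_{k⋆}(x) − a_{j,k⋆}x_j + a_{j,k⋆}E[X_j]; in particular f(x) − f_{−j}(x) = a_{j,k⋆}(x_j − E[X_j]) depends only on the coefficients of the active region k⋆. -/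
open Finset MeasureTheory Classical

/-- Let `f` be piecewise linear on the disjoint hyperrectangles `{A_k}` which partition the
input space, with mutually independent features, and suppose `x ∈ A_{k⋆}`. If feature `j`
satisfies `A_{j,k} = ℝ` for all `k`, then: (1) any point agreeing with `x` off coordinate `j`
lies in `A_{k⋆}`; (2) `f_{−j}(x) := E[f(X) | X_{−j} = x_{−j}]` (replace coordinate `j` by an
independent draw `X_j ~ μ_j` and integrate) equals
`f_{k⋆}(x) − a_{j,k⋆} x_j + a_{j,k⋆} E[X_j]`; and (3)
`f(x) − f_{−j}(x) = a_{j,k⋆}(x_j − E[X_j])`, depending only on the active region. -/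
theorem loco_active_region (p m : ℕ) (a : Fin p → Fin m → ℝ) (b : Fin m → ℝ)
    (A : Fin p → Fin m → Set ℝ)
    (hdisj : Pairwise (Function.onFun Disjoint
      fun k => {w : Fin p → ℝ | ∀ i, w i ∈ A i k}))
    (hcover : ∀ z : Fin p → ℝ, ∃ k, ∀ i, z i ∈ A i k)
    (μj : Measure ℝ) [IsProbabilityMeasure μj] (hint : Integrable (id : ℝ → ℝ) μj)
    (kstar : Fin m) (j : Fin p) (x : Fin p → ℝ)
    (hx : ∀ i, x i ∈ A i kstar)
    (hj : ∀ k, A j k = Set.univ) :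
    (∀ z : Fin p → ℝ, (∀ i, i ≠ j → z i = x i) → ∀ i, z i ∈ A i kstar) ∧
    (∫ t, piecewiseLinear p m a b A (Function.update x j t) ∂μj
      = (∑ i, a i kstar * x i + b kstar) - a j kstar * x j + a j kstar * ∫ t, t ∂μj) ∧
    (piecewiseLinear p m a b A x
        - ∫ t, piecewiseLinear p m a b A (Function.update x j t) ∂μj
      = a j kstar * (x j - ∫ t, t ∂μj)) := by

  have hmem : ∀ z : Fin p → ℝ, (∀ i, i ≠ j → z i = x i) → ∀ i, z i ∈ A i kstar := by
    intro z hz i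
    by_cases h : i = j
    · subst h; rw [hj]; trivial
    · rw [hz i h]; exact hx i
  have hval : ∀ z : Fin p → ℝ, (∀ i, z i ∈ A i kstar) →
      piecewiseLinear p m a b A z = ∑ i, a i kstar * z i + b kstar := by
    intro z hz
    unfold piecewiseLinear
    rw [Finset.sum_eq_single kstar]
    · rw [Set.indicator_of_mem (show z ∈ {w : Fin p → ℝ | ∀ i, w i ∈ A i kstar} from hz)]; ring
    · intro k _ hk
      rw [Set.indicator_of_notMem, mul_zero]
      intro hzk
      exact Set.disjoint_left.mp (hdisj hk) hzk hz
    · intro h; exact absurd (Finset.mem_univ kstar) h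
  have hsum : ∀ t : ℝ, ∑ i, a i kstar * Function.update x j t i
      = (∑ i, a i kstar * x i) - a j kstar * x j + a j kstar * t := by
    intro t
    rw [← Finset.add_sum_erase _ (fun i => a i kstar * Function.update x j t i) (mem_univ j),
        ← Finset.add_sum_erase _ (fun i => a i kstar * x i) (mem_univ j)]
    have h1 : ∀ i ∈ univ.erase j, a i kstar * Function.update x j t i = a i kstar * x i := by
      intro i hi
      rw [Function.update_of_ne (Finset.mem_erase.mp hi).1]
    rw [Finset.sum_congr rfl h1, Function.update_self]
    ring
  have hfval : ∀ t : ℝ, piecewiseLinear p m a b A (Function.update x j t)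
      = ((∑ i, a i kstar * x i) + b kstar - a j kstar * x j) + a j kstar * t := by
    intro t
    rw [hval _ (hmem _ (fun i hi => Function.update_of_ne hi _ _)), hsum]
    ring
  have hintegral : ∫ t, piecewiseLinear p m a b A (Function.update x j t) ∂μj
      = (∑ i, a i kstar * x i + b kstar) - a j kstar * x j + a j kstar * ∫ t, t ∂μj := by
    simp only [hfval]
    have h2 : Integrable (fun t : ℝ => a j kstar * t) μj := hint.const_mul _
    rw [integral_add (integrable_const _) h2, integral_const, integral_const_mul]
    simp
  refine ⟨hmem, hintegral, ?_⟩
  rw [hval x hx, hintegral]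
  ring
end

section
/- Let f be piecewise linear on disjoint regions {A_k}, features mutually independent, and let the globally important set be G = {i : ∃k, A_{i,k} ≠ ℝ}. Let C ⊆ A_{k⋆} be a finite set of observations contained in the active region. For any feature j ∉ G, the R-LOCO attribution Ψ̂_j(C) = (1/|C|)·Σ_{(x,y)∈C}[V(f(x),y) − V(f_{−j}(x),y)] is a function only of the coefficients (a_{k⋆}, b_{k⋆}) of the local model f_{k⋆} and the data in C; it does not depend on the coefficients (a_{k'}, b_{k'}) for any k' ≠ k⋆. -/
open Finset MeasureTheory Classical

/-- The R-LOCO attribution of feature `j` on the finite set of observations `C`: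
`Ψ̂_j(C) = (1/|C|) ∑_{(x,y)∈C} [V(f(x), y) − V(f_{−j}(x), y)]`, where
`f_{−j}(x) = E[f(X) | X_{−j} = x_{−j}]` is computed by replacing coordinate `j` with an
independent draw from `μj` and integrating. -/
noncomputable def rlocoAttr (p m : ℕ) (a : Fin p → Fin m → ℝ) (b : Fin m → ℝ)
    (A : Fin p → Fin m → Set ℝ) (μj : Measure ℝ) (j : Fin p) (V : ℝ → ℝ → ℝ)
    (C : Finset ((Fin p → ℝ) × ℝ)) : ℝ :=
  (1 / (C.card : ℝ)) * ∑ c ∈ C,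
    (V (piecewiseLinear p m a b A c.1) c.2 -
      V (∫ t, piecewiseLinear p m a b A (Function.update c.1 j t) ∂μj) c.2)

lemma piecewiseLinear_eq_local (p m : ℕ) (a : Fin p → Fin m → ℝ) (b : Fin m → ℝ)
    (A : Fin p → Fin m → Set ℝ)
    (hdisj : Pairwise (Function.onFun Disjoint
      fun k => {w : Fin p → ℝ | ∀ i, w i ∈ A i k}))
    (kstar : Fin m) (x : Fin p → ℝ) (hx : ∀ i, x i ∈ A i kstar) :
    piecewiseLinear p m a b A x = ∑ i, a i kstar * x i + b kstar := by
  unfold piecewiseLinear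
  rw [Finset.sum_eq_single kstar]
  · rw [Set.indicator_of_mem (Set.mem_setOf.mpr hx), mul_one]
  · intro k _ hk
    rw [Set.indicator_of_notMem, mul_zero]
    intro hxk
    exact (hdisj hk).ne_of_mem hxk hx rfl
  · simp

/-- **R-LOCO depends only on the active region.** Let `f` be piecewise linear on the disjoint
regions `{A_k}` partitioning the input space, features mutually independent, and let the
globally important set be `G = {i : ∃ k, A_{i,k} ≠ ℝ}`. Let `C ⊆ A_{k⋆}` be a finite set of
observations contained in the active region. For any feature `j ∉ G`, the R-LOCO attribution
`Ψ̂_j(C)` is a function only of the coefficients `(a_{k⋆}, b_{k⋆})` of the local model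
`f_{k⋆}` and the data in `C`: two piecewise models with the same regions agreeing on the
coefficients of region `k⋆` yield the same attribution, whatever the coefficients
`(a_{k'}, b_{k'})`, `k' ≠ k⋆`. -/
theorem rloco_attribution_local (p m : ℕ)
    (a a' : Fin p → Fin m → ℝ) (b b' : Fin m → ℝ) (A : Fin p → Fin m → Set ℝ)
    (hdisj : Pairwise (Function.onFun Disjoint
      fun k => {w : Fin p → ℝ | ∀ i, w i ∈ A i k}))
    (hcover : ∀ z : Fin p → ℝ, ∃ k, ∀ i, z i ∈ A i k)
    (μj : Measure ℝ) [IsProbabilityMeasure μj] (hint : Integrable (id : ℝ → ℝ) μj)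
    (kstar : Fin m) (j : Fin p)
    (hj : ∀ k, A j k = Set.univ)
    (V : ℝ → ℝ → ℝ) (C : Finset ((Fin p → ℝ) × ℝ))
    (hC : ∀ c ∈ C, ∀ i, c.1 i ∈ A i kstar)
    (ha : ∀ i, a i kstar = a' i kstar) (hb : b kstar = b' kstar) :
    rlocoAttr p m a b A μj j V C = rlocoAttr p m a' b' A μj j V C := by
  unfold rlocoAttr
  congr 1
  apply Finset.sum_congr rfl
  intro c hc
  have hx := hC c hc
  have h1 : piecewiseLinear p m a b A c.1 = piecewiseLinear p m a' b' A c.1 := by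
    rw [piecewiseLinear_eq_local p m a b A hdisj kstar c.1 hx,
        piecewiseLinear_eq_local p m a' b' A hdisj kstar c.1 hx, hb]
    congr 1
    exact Finset.sum_congr rfl fun i _ => by rw [ha i]
  have h2 : ∀ t, piecewiseLinear p m a b A (Function.update c.1 j t) =
      piecewiseLinear p m a' b' A (Function.update c.1 j t) := by
    intro t
    have hx' : ∀ i, Function.update c.1 j t i ∈ A i kstar := by
      intro i
      by_cases h : i = j
      · subst h; rw [hj kstar]; trivial
      · rw [Function.update_of_ne h]; exact hx i
    rw [piecewiseLinear_eq_local p m a b A hdisj kstar _ hx',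
        piecewiseLinear_eq_local p m a' b' A hdisj kstar _ hx', hb]
    congr 1
    exact Finset.sum_congr rfl fun i _ => by rw [ha i]
  rw [h1]
  congr 2
  exact integral_congr_ae (Filter.Eventually.of_forall h2)
end
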